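/- Let u_1, u_2 ∈ Π with u_1u_2 in normal form (λ(u_1) + u_2 = V), and let x ∈ Π with λ(u_2) ⊋ x. Then there exists w ∈ Π with (u_2, x, λ(w)) ∈ T', and the word u_1w is in normal form, i.e., λ(u_1) + w = V. -/

import Mathlib

/-- An abstract finite projective geometry of dimension `n` with an involution `lam`
satisfying `lam (Π_i) = Π_{n+1-i}`, together with an Ã_n-triangle presentation `T`
compatible with `lam`, satisfying axioms (A)–(F) of Cartwright–Shapiro.
Here `T' = {(u,v,w) ∈ T : dim u + dim v + dim w = n+1}`. -/
structure TrianglePresentation (n : ℕ) (P : Type*) where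
  dim : P → ℕ
  incid : P → P → Prop
  lam : P → P
  T : P → P → P → Prop
  incid_symm : ∀ x y, incid x y → incid y x
  lam_invol : Function.Involutive lam
  dim_mem : ∀ x, 1 ≤ dim x ∧ dim x ≤ n
  lam_dim : ∀ x, dim (lam x) = n + 1 - dim x
  /-- Axiom (A): `(u,v,w) ∈ T` for some `w` iff `λ(u)` and `v` are distinct and incident. -/
  axiomA : ∀ u v, (∃ w, T u v w) ↔ (lam u ≠ v ∧ incid (lam u) v)
  /-- Axiom (B): cyclic invariance. -/
  axiomB : ∀ u v w, T u v w → T v w u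
  /-- Axiom (C): uniqueness of the third vertex. -/
  axiomC : ∀ u v w₁ w₂, T u v w₁ → T u v w₂ → w₁ = w₂
  /-- Axiom (D). -/
  axiomD : ∀ u v w, T u v w → T (lam w) (lam v) (lam u)
  /-- Axiom (E). -/
  axiomE : ∀ u v w, T u v w →
    dim u + dim v + dim w = n + 1 ∨ dim u + dim v + dim w = 2 * (n + 1)
  /-- Axiom (F), stated for the half `T'` of `T`. -/
  axiomF : ∀ x y u x' y',
    (T x y u ∧ dim x + dim y + dim u = n + 1) →
    (T x' y' (lam u) ∧ dim x' + dim y' + dim (lam u) = n + 1) →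
    ∃ w, (T y' x w ∧ dim y' + dim x + dim w = n + 1) ∧
         (T y x' (lam w) ∧ dim y + dim x' + dim (lam w) = n + 1)
  /-- For `u, v ∈ Π`, `(u,v,w) ∈ T'` for some `w` iff `λ(u) ⊋ v`. -/
  exists_T' : ∀ u v,
    (∃ w, T u v w ∧ dim u + dim v + dim w = n + 1) ↔
      (lam u ≠ v ∧ incid (lam u) v ∧ dim v < dim (lam u))

namespace TrianglePresentation

variable {n : ℕ} {P : Type*} (TP : TrianglePresentation n P)

/-- The half `T'` of `T` consisting of triples with dimension sum `n+1`. -/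
def T' (u v w : P) : Prop :=
  TP.T u v w ∧ TP.dim u + TP.dim v + TP.dim w = n + 1

/-- `T'' = T \ T'`. -/
def T'' (u v w : P) : Prop :=
  TP.T u v w ∧ ¬ (TP.dim u + TP.dim v + TP.dim w = n + 1)

/-- `x ⊂ y`: `x` is incident with `y` and `dim x ≤ dim y` (or `x = y`). -/
def Sub (x y : P) : Prop :=
  x = y ∨ (TP.incid x y ∧ TP.dim x ≤ TP.dim y)

/-- `x ⊊ y`: proper containment. -/
def PSub (x y : P) : Prop :=
  TP.Sub x y ∧ x ≠ y

/-- `x + y = V`: no element of `Π` contains both `x` and `y`. -/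
def SumV (x y : P) : Prop :=
  ¬ ∃ z, TP.Sub x z ∧ TP.Sub y z

/-- `x + y = c`: `c` is the join of `x` and `y` in the projective geometry. -/
def JoinEq (x y c : P) : Prop :=
  TP.Sub x c ∧ TP.Sub y c ∧ ∀ z, TP.Sub x z → TP.Sub y z → TP.Sub c z

end TrianglePresentation

/-!
Axiom (E) makes containment between distinct incident elements strict in dimension, so
`v ⊊ λ(u)` holds exactly when `(u, v, w) ∈ T'` for some `w`. Applying this to `x ⊊ λ(u₂)` gives
`(u₂, x, λ(w)) ∈ T'`, and reading the rotated triple `(λ(w), u₂, x)` backwards gives `u₂ ⊊ w`.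
Containment is transitive by axiom (F), so any `z` containing `λ(u₁)` and `w` would also
contain `u₂`, contradicting `λ(u₁) + u₂ = V`.
-/

namespace TrianglePresentation

variable {n : ℕ} {P : Type*} {TP : TrianglePresentation n P}

protected lemma T'.rotate {u v w : P} (h : TP.T' u v w) : TP.T' v w u :=
  ⟨TP.axiomB _ _ _ h.1, by have := h.2; omega⟩

variable (TP)

lemma dim_lt_of_incid_of_ne {a b : P} (hinc : TP.incid a b) (hne : a ≠ b)
    (hle : TP.dim a ≤ TP.dim b) : TP.dim a < TP.dim b := by
  refine hle.lt_of_ne fun heq => ?_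
  obtain ⟨w, hw⟩ := (TP.axiomA (TP.lam a) b).mpr <| by
    rw [TP.lam_invol a]; exact ⟨hne, hinc⟩
  -- the dimension sum would be `n + 1 + dim w`, strictly between `n + 1` and `2 (n + 1)`
  have hE := TP.axiomE _ _ _ hw
  have := TP.lam_dim a
  have := TP.dim_mem a
  have := TP.dim_mem w
  omega

lemma psub_lam_iff_exists_T' (u v : P) : TP.PSub v (TP.lam u) ↔ ∃ w, TP.T' u v w := by
  unfold T'
  rw [TP.exists_T']
  constructor
  · rintro ⟨hsub | ⟨hinc, hle⟩, hne⟩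
    · exact absurd hsub hne
    · exact ⟨Ne.symm hne, TP.incid_symm _ _ hinc, TP.dim_lt_of_incid_of_ne hinc hne hle⟩
  · rintro ⟨hne, hinc, hlt⟩
    exact ⟨Or.inr ⟨TP.incid_symm _ _ hinc, hlt.le⟩, Ne.symm hne⟩

lemma psub_iff_exists_T' (u v : P) : TP.PSub v u ↔ ∃ w, TP.T' (TP.lam u) v w := by
  rw [← TP.psub_lam_iff_exists_T', TP.lam_invol u]

lemma psub_trans {a b c : P} (hab : TP.PSub a b) (hbc : TP.PSub b c) : TP.PSub a c := by
  obtain ⟨p, hp⟩ := (TP.psub_iff_exists_T' b a).mp hab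
  obtain ⟨q, hq⟩ := (TP.psub_iff_exists_T' c b).mp hbc
  have hq' : TP.T' q (TP.lam c) (TP.lam (TP.lam b)) := by
    rw [TP.lam_invol b]; exact hq.rotate.rotate
  obtain ⟨w, hw, -⟩ := TP.axiomF a p (TP.lam b) q (TP.lam c) hp.rotate hq'
  exact (TP.psub_iff_exists_T' c a).mpr ⟨w, hw⟩

lemma sub_trans {a b c : P} (hab : TP.Sub a b) (hbc : TP.Sub b c) : TP.Sub a c := by
  by_cases hab' : a = b
  · rwa [hab']
  by_cases hbc' : b = c
  · rwa [← hbc']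
  exact (TP.psub_trans ⟨hab, hab'⟩ ⟨hbc, hbc'⟩).1

variable {TP}

lemma SumV.mono_right {a b c : P} (h : TP.SumV a b) (hbc : TP.Sub b c) : TP.SumV a c :=
  fun ⟨z, haz, hcz⟩ => h ⟨z, haz, TP.sub_trans hbc hcz⟩

end TrianglePresentation

/-- Lemma 2, case (3): if `u₁u₂` is in normal form (`λ(u₁) + u₂ = V`) and
`λ(u₂) ⊋ x`, then `(u₂, x, λ(w)) ∈ T'` for some `w`, and `u₁w` is in normal form
(`λ(u₁) + w = V`). -/
theorem lemma2_case3 {n : ℕ} {P : Type*} (TP : TrianglePresentation n P)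
    (u₁ u₂ x : P)
    (hnf : TP.SumV (TP.lam u₁) u₂)
    (hx : TP.PSub x (TP.lam u₂)) :
    ∃ w, TP.T' u₂ x (TP.lam w) ∧ TP.SumV (TP.lam u₁) w := by
  obtain ⟨w, hw⟩ := (TP.psub_lam_iff_exists_T' u₂ x).mp hx
  have hu₂w : TP.PSub u₂ (TP.lam w) := (TP.psub_lam_iff_exists_T' w u₂).mpr ⟨x, hw.rotate.rotate⟩
  exact ⟨TP.lam w, by rwa [TP.lam_invol w], hnf.mono_right hu₂w.1⟩
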